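/- Suppose each local objective L_u (u = 1, …, U) is differentiable, convex, and L-smooth; let L = (1/U)·∑_{u=1}^U L_u, let W* be a global minimizer of L, and let σ*² ≥ 0 satisfy (1/U)·∑_{u=1}^U ‖∇L_u(W*)‖² ≤ σ*². Let each client run E steps of local gradient descent with stepsize η > 0 from the common starting point W, and let h_u = ∑_{e=0}^{E−1} ∇L_u(W_u^(e)). Then (1/U)·∑_{u=1}^U ‖h_u‖² ≤ (3·E·L²/U)·∑_{u=1}^U ∑_{e=0}^{E−1} ‖W_u^(e) − W‖² + 6·E²·L·(L(W) − L(W*)) + 3·E²·σ*². -/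

import Mathlib

/-! Split each local gradient as `(∇f(W_e) - ∇f(W)) + (∇f(W) - ∇f(W*)) + ∇f(W*)` and bound the
three pieces by `L`-smoothness, by co-coercivity `‖∇f x - ∇f y‖² ≤ 2L·D_f(x, y)` of convex
`L`-smooth functions (`D_f` the Bregman divergence), and by the heterogeneity bound. Averaged over
the clients, the divergences `D_{L_u}(W, W*)` add up to `L(W) - L(W*)`, because the average of the
`∇L_u(W*)` is `∇L(W*) = 0`. -/

open scoped RealInnerProductSpace

open Finset InnerProductSpace

theorem norm_sum_sq_le_card_mul_sum_norm_sq {ι G : Type*} [SeminormedAddCommGroup G]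
    (s : Finset ι) (v : ι → G) : ‖∑ i ∈ s, v i‖ ^ 2 ≤ #s * ∑ i ∈ s, ‖v i‖ ^ 2 :=
  (pow_le_pow_left₀ (norm_nonneg _) (norm_sum_le s v) 2).trans (sq_sum_le_card_mul_sum_sq ..)

theorem norm_add_add_sq_le {G : Type*} [SeminormedAddCommGroup G] (a b c : G) :
    ‖a + b + c‖ ^ 2 ≤ 3 * (‖a‖ ^ 2 + ‖b‖ ^ 2 + ‖c‖ ^ 2) := by
  simpa [Fin.sum_univ_three] using norm_sum_sq_le_card_mul_sum_norm_sq univ ![a, b, c]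

section Gradient

variable {F : Type*} [NormedAddCommGroup F] [InnerProductSpace ℝ F] [CompleteSpace F]
  {f : F → ℝ} {L : ℝ}

noncomputable def bregmanDiv (f : F → ℝ) (x y : F) : ℝ := f x - f y - ⟪gradient f y, x - y⟫

def LipschitzGradient (f : F → ℝ) (L : ℝ) : Prop :=
  ∀ x y, ‖gradient f x - gradient f y‖ ≤ L * ‖x - y‖

theorem IsLocalMin.hasGradientAt_eq_zero {g x : F} (h : IsLocalMin f x)
    (hg : HasGradientAt f g x) : g = 0 := by
  simpa using h.hasFDerivAt_eq_zero hg

theorem hasGradientAt_const_mul_sum {ι : Type*} {s : Finset ι} {f : ι → F → ℝ} {x : F}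
    (hf : ∀ i ∈ s, DifferentiableAt ℝ (f i) x) (c : ℝ) :
    HasGradientAt (fun y => c * ∑ i ∈ s, f i y) (c • ∑ i ∈ s, gradient (f i) x) x := by
  rw [hasGradientAt_iff_hasFDerivAt, map_smul, map_sum]
  simp only [toDual_gradient]
  exact (HasFDerivAt.fun_sum fun i hi => (hf i hi).hasFDerivAt).const_mul c

theorem DifferentiableAt.hasDerivAt_comp_add_smul {x v : F} {t : ℝ}
    (hf : DifferentiableAt ℝ f (x + t • v)) :
    HasDerivAt (fun s : ℝ => f (x + s • v)) ⟪gradient f (x + t • v), v⟫ t := by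
  have hline : HasDerivAt (fun s : ℝ => x + s • v) v t := by
    simpa using ((hasDerivAt_id t).smul_const v).const_add x
  simpa [Function.comp_def, ← inner_gradient_left] using hf.hasFDerivAt.comp_hasDerivAt t hline

theorem ConvexOn.bregmanDiv_nonneg (hconv : ConvexOn ℝ Set.univ f) {x : F}
    (hf : DifferentiableAt ℝ f x) (y : F) : 0 ≤ bregmanDiv f y x := by
  have hline : ConvexOn ℝ Set.univ fun t : ℝ => f (x + t • (y - x)) := by
    simpa [Function.comp_def, AffineMap.lineMap_apply_module', add_comm] using
      hconv.comp_affineMap (AffineMap.lineMap x y)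
  have hd : HasDerivAt (fun t : ℝ => f (x + t • (y - x))) ⟪gradient f x, y - x⟫ 0 := by
    have hf0 : DifferentiableAt ℝ f (x + (0 : ℝ) • (y - x)) := by simpa using hf
    simpa only [zero_smul, add_zero] using hf0.hasDerivAt_comp_add_smul
  have hslope := hline.le_slope_of_hasDerivAt (Set.mem_univ 0) (Set.mem_univ 1) one_pos hd
  simp only [slope_def_field, one_smul, zero_smul, add_zero, add_sub_cancel] at hslope
  unfold bregmanDiv
  linarith

theorem LipschitzGradient.bregmanDiv_le (hL : LipschitzGradient f L) (hf : Differentiable ℝ f)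
    (x y : F) : bregmanDiv f y x ≤ L / 2 * ‖y - x‖ ^ 2 := by
  set v := y - x
  set g : ℝ → ℝ := fun t => f (x + t • v) - t * ⟪gradient f x, v⟫ - L / 2 * t ^ 2 * ‖v‖ ^ 2
  have hg : ∀ t, HasDerivAt g (⟪gradient f (x + t • v) - gradient f x, v⟫ - L * t * ‖v‖ ^ 2) t := by
    intro t
    refine (((hf _).hasDerivAt_comp_add_smul.sub ((hasDerivAt_id t).mul_const _)).sub
      (((hasDerivAt_pow 2 t).const_mul (L / 2)).mul_const (‖v‖ ^ 2))).congr_deriv ?_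
    rw [inner_sub_left]
    push_cast
    ring
  have hg' : ∀ t ∈ interior (Set.Ici (0 : ℝ)),
      ⟪gradient f (x + t • v) - gradient f x, v⟫ - L * t * ‖v‖ ^ 2 ≤ 0 := by
    intro t ht
    rw [interior_Ici, Set.mem_Ioi] at ht
    have hinner : ⟪gradient f (x + t • v) - gradient f x, v⟫ ≤ L * t * ‖v‖ ^ 2 :=
      calc ⟪gradient f (x + t • v) - gradient f x, v⟫
          ≤ ‖gradient f (x + t • v) - gradient f x‖ * ‖v‖ := real_inner_le_norm _ _
        _ ≤ L * ‖x + t • v - x‖ * ‖v‖ := by gcongr; exact hL _ _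
        _ = L * t * ‖v‖ ^ 2 := by
          rw [add_sub_cancel_left, norm_smul, Real.norm_of_nonneg ht.le]; ring
    linarith
  have hanti : AntitoneOn g (Set.Ici 0) :=
    antitoneOn_of_hasDerivWithinAt_nonpos (convex_Ici 0)
      (fun t _ => (hg t).continuousAt.continuousWithinAt)
      (fun t _ => (hg t).hasDerivWithinAt) hg'
  have hg01 := hanti (Set.mem_Ici.2 le_rfl) (Set.mem_Ici.2 zero_le_one) zero_le_one
  simp only [g, v, one_smul, zero_smul, add_zero, add_sub_cancel, one_mul, one_pow, zero_mul,
    zero_pow two_ne_zero, mul_zero, sub_zero] at hg01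
  unfold bregmanDiv
  linarith

theorem LipschitzGradient.sq_norm_gradient_le_of_isMinOn (hL : LipschitzGradient f L)
    (hL0 : 0 < L) (hf : Differentiable ℝ f) {y : F} (hy : IsMinOn f Set.univ y) (x : F) :
    ‖gradient f x‖ ^ 2 ≤ 2 * L * (f x - f y) := by
  -- one gradient step of length `1 / L` from `x` decreases `f` by at least `‖∇f x‖² / (2L)`
  have hstep := hL.bregmanDiv_le hf x (x - L⁻¹ • gradient f x)
  have hmin : f y ≤ f (x - L⁻¹ • gradient f x) := hy (Set.mem_univ _)
  simp only [bregmanDiv, sub_sub_cancel_left, inner_neg_right, real_inner_smul_right,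
    real_inner_self_eq_norm_sq, norm_neg, norm_smul, mul_pow, Real.norm_eq_abs, sq_abs] at hstep
  have hdecrease : L⁻¹ / 2 * ‖gradient f x‖ ^ 2 ≤ f x - f y := by
    have : L / 2 * (L⁻¹ ^ 2 * ‖gradient f x‖ ^ 2) = L⁻¹ / 2 * ‖gradient f x‖ ^ 2 := by
      field_simp
    linarith
  calc ‖gradient f x‖ ^ 2 = 2 * L * (L⁻¹ / 2 * ‖gradient f x‖ ^ 2) := by field_simp
    _ ≤ 2 * L * (f x - f y) := by gcongr

theorem LipschitzGradient.sq_norm_sub_gradient_le (hL : LipschitzGradient f L) (hL0 : 0 < L)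
    (hf : Differentiable ℝ f) (hconv : ConvexOn ℝ Set.univ f) (x y : F) :
    ‖gradient f x - gradient f y‖ ^ 2 ≤ 2 * L * bregmanDiv f x y := by
  -- apply the previous bound to `f - ⟪∇f y, ·⟫`, which is minimised at `y` by convexity
  set φ : F → ℝ := fun z => f z - ⟪gradient f y, z⟫
  have hφ : ∀ z, HasGradientAt φ (gradient f z - gradient f y) z := by
    intro z
    rw [hasGradientAt_iff_hasFDerivAt, map_sub, toDual_gradient]
    exact (hf z).hasFDerivAt.sub (toDual ℝ F (gradient f y)).hasFDerivAt
  have hφgrad : gradient φ = fun z => gradient f z - gradient f y := gradient_eq hφ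
  have hφL : LipschitzGradient φ L := fun a b => by
    simpa only [hφgrad, sub_sub_sub_cancel_right] using hL a b
  have hφmin : IsMinOn φ Set.univ y := fun z _ => by
    have hzy := hconv.bregmanDiv_nonneg (hf y) z
    simp only [bregmanDiv, inner_sub_right] at hzy
    simp only [Set.mem_ofPred_eq, φ]
    linarith
  have hφx := hφL.sq_norm_gradient_le_of_isMinOn hL0 (fun z => (hφ z).differentiableAt) hφmin x
  simp only [hφgrad, φ] at hφx
  refine hφx.trans_eq ?_
  rw [bregmanDiv, inner_sub_right]
  ring

theorem LipschitzGradient.sq_norm_gradient_le (hL : LipschitzGradient f L) (hL0 : 0 < L)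
    (hf : Differentiable ℝ f) (hconv : ConvexOn ℝ Set.univ f) (p w y : F) :
    ‖gradient f p‖ ^ 2 ≤
      3 * L ^ 2 * ‖p - w‖ ^ 2 + 6 * L * bregmanDiv f w y + 3 * ‖gradient f y‖ ^ 2 := by
  have hpw : ‖gradient f p - gradient f w‖ ^ 2 ≤ L ^ 2 * ‖p - w‖ ^ 2 := by
    simpa only [mul_pow] using pow_le_pow_left₀ (norm_nonneg _) (hL p w) 2
  have hwy := hL.sq_norm_sub_gradient_le hL0 hf hconv w y
  calc ‖gradient f p‖ ^ 2
      = ‖(gradient f p - gradient f w) + (gradient f w - gradient f y) + gradient f y‖ ^ 2 := by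
        rw [sub_add_sub_cancel, sub_add_cancel]
    _ ≤ 3 * (‖gradient f p - gradient f w‖ ^ 2 + ‖gradient f w - gradient f y‖ ^ 2 +
          ‖gradient f y‖ ^ 2) := norm_add_add_sq_le _ _ _
    _ ≤ _ := by linarith

theorem LipschitzGradient.sq_norm_sum_gradient_le {ι : Type*} (hL : LipschitzGradient f L)
    (hL0 : 0 < L) (hf : Differentiable ℝ f) (hconv : ConvexOn ℝ Set.univ f) (s : Finset ι)
    (p : ι → F) (w y : F) :
    ‖∑ i ∈ s, gradient f (p i)‖ ^ 2 ≤
      3 * #s * L ^ 2 * ∑ i ∈ s, ‖p i - w‖ ^ 2 + 6 * #s ^ 2 * L * bregmanDiv f w y +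
        3 * #s ^ 2 * ‖gradient f y‖ ^ 2 :=
  calc ‖∑ i ∈ s, gradient f (p i)‖ ^ 2
      ≤ #s * ∑ i ∈ s, ‖gradient f (p i)‖ ^ 2 := norm_sum_sq_le_card_mul_sum_norm_sq _ _
    _ ≤ #s * ∑ i ∈ s,
          (3 * L ^ 2 * ‖p i - w‖ ^ 2 + 6 * L * bregmanDiv f w y + 3 * ‖gradient f y‖ ^ 2) := by
        gcongr with i
        exact hL.sq_norm_gradient_le hL0 hf hconv _ w y
    _ = _ := by
        simp only [sum_add_distrib, sum_const, nsmul_eq_mul, ← mul_sum]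
        ring

end Gradient

theorem aggregate_client_gradient_norm_bound_general
    {E : Type*} [NormedAddCommGroup E] [InnerProductSpace ℝ E] [CompleteSpace E]
    (U : ℕ) (Lf : Fin U → E → ℝ) (L : ℝ) (hL : 0 < L)
    (hdiff : ∀ u, Differentiable ℝ (Lf u))
    (hconv : ∀ u, ConvexOn ℝ Set.univ (Lf u))
    (hsmooth : ∀ u, ∀ x y : E, ‖gradient (Lf u) x - gradient (Lf u) y‖ ≤ L * ‖x - y‖)
    (Lg : E → ℝ) (hLg : ∀ x : E, Lg x = ((1 : ℝ) / U) * ∑ u, Lf u x)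
    (Wstar : E) (hmin : ∀ x : E, Lg Wstar ≤ Lg x)
    (σ2 : ℝ)
    (hhet : ((1 : ℝ) / U) * ∑ u, ‖gradient (Lf u) Wstar‖ ^ 2 ≤ σ2)
    (N : ℕ)
    (W : E) (Wseq : Fin U → ℕ → E)
    (h : Fin U → E)
    (hh : ∀ u, h u = ∑ e ∈ Finset.range N, gradient (Lf u) (Wseq u e)) :
    ((1 : ℝ) / U) * ∑ u, ‖h u‖ ^ 2 ≤
      (3 * N * L ^ 2 / U) * ∑ u, ∑ e ∈ Finset.range N, ‖Wseq u e - W‖ ^ 2 +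
        6 * N ^ 2 * L * (Lg W - Lg Wstar) + 3 * N ^ 2 * σ2 := by
  have hcrit : ((1 : ℝ) / U) • ∑ u, gradient (Lf u) Wstar = 0 := by
    refine IsLocalMin.hasGradientAt_eq_zero (f := Lg) (Filter.Eventually.of_forall hmin) ?_
    rw [funext hLg]
    exact hasGradientAt_const_mul_sum (fun u _ => hdiff u Wstar) _
  have hbregman : ((1 : ℝ) / U) * ∑ u, bregmanDiv (Lf u) W Wstar = Lg W - Lg Wstar := by
    simp only [bregmanDiv, sum_sub_distrib, ← sum_inner, mul_sub, hLg, ← real_inner_smul_left,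
      hcrit, inner_zero_left, sub_zero]
  calc ((1 : ℝ) / U) * ∑ u, ‖h u‖ ^ 2
      ≤ (1 / U) * ∑ u, (3 * N * L ^ 2 * ∑ e ∈ range N, ‖Wseq u e - W‖ ^ 2 +
          6 * N ^ 2 * L * bregmanDiv (Lf u) W Wstar + 3 * N ^ 2 * ‖gradient (Lf u) Wstar‖ ^ 2) := by
        gcongr with u
        simpa only [hh, card_range] using LipschitzGradient.sq_norm_sum_gradient_le
          (hsmooth u) hL (hdiff u) (hconv u) (range N) (Wseq u) W Wstar
    _ = (3 * N * L ^ 2 / U) * ∑ u, ∑ e ∈ range N, ‖Wseq u e - W‖ ^ 2 +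
          6 * N ^ 2 * L * ((1 / U) * ∑ u, bregmanDiv (Lf u) W Wstar) +
          3 * N ^ 2 * ((1 / U) * ∑ u, ‖gradient (Lf u) Wstar‖ ^ 2) := by
        simp only [sum_add_distrib, ← mul_sum]
        ring
    _ ≤ _ := by
        rw [hbregman]
        gcongr

/-- Bound on the averaged squared norm of the aggregate client gradients
`h_u = ∑_{e<N} ∇L_u(W_u^(e))`. -/
theorem aggregate_client_gradient_norm_bound
    {E : Type*} [NormedAddCommGroup E] [InnerProductSpace ℝ E] [CompleteSpace E]
    (U : ℕ) (hU : 0 < U) (Lf : Fin U → E → ℝ) (L : ℝ) (hL : 0 < L)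
    (hdiff : ∀ u, Differentiable ℝ (Lf u))
    (hconv : ∀ u, ConvexOn ℝ Set.univ (Lf u))
    (hsmooth : ∀ u, ∀ x y : E, ‖gradient (Lf u) x - gradient (Lf u) y‖ ≤ L * ‖x - y‖)
    (Lg : E → ℝ) (hLg : ∀ x : E, Lg x = ((1 : ℝ) / U) * ∑ u, Lf u x)
    (Wstar : E) (hmin : ∀ x : E, Lg Wstar ≤ Lg x)
    (σ2 : ℝ) (hσ2 : 0 ≤ σ2)
    (hhet : ((1 : ℝ) / U) * ∑ u, ‖gradient (Lf u) Wstar‖ ^ 2 ≤ σ2)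
    (η : ℝ) (hη0 : 0 < η)
    (N : ℕ) (hN : 1 ≤ N)
    (W : E) (Wseq : Fin U → ℕ → E)
    (hW0 : ∀ u, Wseq u 0 = W)
    (hstep : ∀ u e, Wseq u (e + 1) = Wseq u e - η • gradient (Lf u) (Wseq u e))
    (h : Fin U → E)
    (hh : ∀ u, h u = ∑ e ∈ Finset.range N, gradient (Lf u) (Wseq u e)) :
    ((1 : ℝ) / U) * ∑ u, ‖h u‖ ^ 2 ≤
      (3 * N * L ^ 2 / U) * ∑ u, ∑ e ∈ Finset.range N, ‖Wseq u e - W‖ ^ 2 +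
        6 * N ^ 2 * L * (Lg W - Lg Wstar) + 3 * N ^ 2 * σ2 :=
  aggregate_client_gradient_norm_bound_general U Lf L hL hdiff hconv hsmooth Lg hLg Wstar hmin σ2
    hhet N W Wseq h hh
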